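/- A scoring play game is G = {G^L | G^S | G^R} with G^L, G^R finite sets of scoring games and G^S ∈ ℤ, and left/right final scores defined recursively by: if G^L = ∅ then G_F^{SL} = G^S else G_F^{SL} = max_{g ∈ G^L} g_F^{SR}, and symmetrically if G^R = ∅ then G_F^{SR} = G^S else G_F^{SR} = min_{g ∈ G^R} g_F^{SL}. Disjunctive sum: G +ℓ H has left options {g +ℓ H : g ∈ G^L} ∪ {G +ℓ h : h ∈ H^L}, right options symmetrically, and score G^S + H^S. Let G = {2, {1|2|3} | 0 | -2, {-3|-2|-1}} where numbers a abbreviate the game {∅ | a | ∅}. Then (G +ℓ G)_F^{SL} < 0 and (G +ℓ G)_F^{SR} > 0; i.e., G +ℓ G is a previous-player (P-position) game and in particular is not equivalent to the zero game 0 = {∅|0|∅}. -/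

import Mathlib

inductive SGame : Type where
  | mk (L : List SGame) (s : ℤ) (R : List SGame) : SGame

namespace SGame

mutual
  def leftScore : SGame → ℤ
    | mk L s _ => ((L.attach.map fun x => rightScore x.1).max?).getD s
  termination_by g => sizeOf g
  decreasing_by
    obtain ⟨g, hg⟩ := x
    have := List.sizeOf_lt_of_mem hg
    simp only [SGame.mk.sizeOf_spec]
    omega
  def rightScore : SGame → ℤ
    | mk _ s R => ((R.attach.map fun x => leftScore x.1).min?).getD s
  termination_by g => sizeOf g
  decreasing_by
    obtain ⟨g, hg⟩ := x
    have := List.sizeOf_lt_of_mem hg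
    simp only [SGame.mk.sizeOf_spec]
    omega
end

/-- The ended game with score `a`. -/
def num (a : ℤ) : SGame := mk [] a []

def add : SGame → SGame → SGame
  | mk L1 s1 R1, mk L2 s2 R2 =>
    mk ((L1.attach.map fun x => add x.1 (mk L2 s2 R2)) ++
        (L2.attach.map fun y => add (mk L1 s1 R1) y.1))
       (s1 + s2)
       ((R1.attach.map fun x => add x.1 (mk L2 s2 R2)) ++
        (R2.attach.map fun y => add (mk L1 s1 R1) y.1))
termination_by G H => sizeOf G + sizeOf H
decreasing_by
  all_goals first
    | (obtain ⟨g, hg⟩ := x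
       have := List.sizeOf_lt_of_mem hg
       simp only [SGame.mk.sizeOf_spec] at *
       omega)
    | (obtain ⟨g, hg⟩ := y
       have := List.sizeOf_lt_of_mem hg
       simp only [SGame.mk.sizeOf_spec] at *
       omega)

end SGame

/-- The game `G = {2, {1|2|3} | 0 | -2, {-3|-2|-1}}` from the paper. -/
def Gex : SGame :=
  SGame.mk [SGame.num 2, SGame.mk [SGame.num 1] 2 [SGame.num 3]] 0
    [SGame.num (-2), SGame.mk [SGame.num (-3)] (-2) [SGame.num (-1)]]

/-! Every Left move in `Gex + Gex` leaves `2` or `{1|2|3}` in one copy of `Gex`; Right answers in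
the other copy with `{-3|-2|-1}` or `-2` respectively, and Left's only remaining move ends the game
at `-1`. So the left final score is at most `-1`.

Negation exchanges left and right final scores up to sign and commutes with the disjunctive sum,
and `-Gex = Gex`. Hence the right final score of `Gex + Gex` is the negative of its left final
score. -/

theorem List.max?_map_neg {α : Type*} [AddCommGroup α] [LinearOrder α] [IsOrderedAddMonoid α]
    (l : List α) : (l.map (-·)).max? = l.min?.map (-·) := by
  induction l with
  | nil => rfl
  | cons x xs ih =>
    rw [List.map_cons, List.max?_cons, List.min?_cons, ih]
    cases xs.min? <;> simp [max_neg_neg]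

theorem List.min?_map_neg {α : Type*} [AddCommGroup α] [LinearOrder α] [IsOrderedAddMonoid α]
    (l : List α) : (l.map (-·)).min? = l.max?.map (-·) := by
  simpa [List.map_map, Function.comp_def] using
    (congrArg (Option.map (-·)) (max?_map_neg (l.map (-·)))).symm

namespace SGame

def leftMoves : SGame → List SGame
  | mk L _ _ => L

def score : SGame → ℤ
  | mk _ s _ => s

def rightMoves : SGame → List SGame
  | mk _ _ R => R

@[simp] theorem leftMoves_mk (L : List SGame) (s : ℤ) (R : List SGame) :
    (mk L s R).leftMoves = L := rfl

@[simp] theorem score_mk (L : List SGame) (s : ℤ) (R : List SGame) :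
    (mk L s R).score = s := rfl

@[simp] theorem rightMoves_mk (L : List SGame) (s : ℤ) (R : List SGame) :
    (mk L s R).rightMoves = R := rfl

theorem ext {G H : SGame} (hL : G.leftMoves = H.leftMoves) (hs : G.score = H.score)
    (hR : G.rightMoves = H.rightMoves) : G = H := by
  cases G; cases H; simp_all

theorem sizeOf_lt_of_mem_leftMoves {G g : SGame} (hg : g ∈ G.leftMoves) :
    sizeOf g < sizeOf G := by
  obtain ⟨L, s, R⟩ := G
  have := List.sizeOf_lt_of_mem (as := L) hg
  simp only [mk.sizeOf_spec]
  omega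

theorem sizeOf_lt_of_mem_rightMoves {G g : SGame} (hg : g ∈ G.rightMoves) :
    sizeOf g < sizeOf G := by
  obtain ⟨L, s, R⟩ := G
  have := List.sizeOf_lt_of_mem (as := R) hg
  simp only [mk.sizeOf_spec]
  omega

theorem leftScore_eq (G : SGame) :
    G.leftScore = (G.leftMoves.map rightScore).max?.getD G.score := by
  cases G
  rw [leftScore]
  simp

theorem rightScore_eq (G : SGame) :
    G.rightScore = (G.rightMoves.map leftScore).min?.getD G.score := by
  cases G
  rw [rightScore]
  simp

theorem leftScore_lt_of_forall {G : SGame} {a : ℤ} (hG : G.leftMoves ≠ [])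
    (h : ∀ g ∈ G.leftMoves, g.rightScore < a) : G.leftScore < a := by
  obtain ⟨m, hm⟩ := Option.isSome_iff_exists.1
    (List.isSome_max?_of_ne_nil (l := G.leftMoves.map rightScore) (by simpa using hG))
  rw [leftScore_eq, hm, Option.getD_some]
  obtain ⟨g, hg, rfl⟩ := List.mem_map.1 (List.max?_mem hm)
  exact h g hg

theorem rightScore_le_of_mem {G g : SGame} (hg : g ∈ G.rightMoves) :
    G.rightScore ≤ g.leftScore := by
  obtain ⟨m, hm⟩ := Option.isSome_iff_exists.1
    (List.isSome_min?_of_mem (List.mem_map_of_mem (f := leftScore) hg))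
  rw [rightScore_eq, hm, Option.getD_some]
  exact (List.le_min?_iff hm).1 le_rfl _ (List.mem_map_of_mem hg)

@[simp] theorem leftMoves_add (G H : SGame) :
    (G.add H).leftMoves = G.leftMoves.map (·.add H) ++ H.leftMoves.map G.add := by
  cases G; cases H
  rw [add]
  simp

@[simp] theorem score_add (G H : SGame) : (G.add H).score = G.score + H.score := by
  cases G; cases H
  rw [add]
  simp

@[simp] theorem rightMoves_add (G H : SGame) :
    (G.add H).rightMoves = G.rightMoves.map (·.add H) ++ H.rightMoves.map G.add := by
  cases G; cases H
  rw [add]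
  simp

def neg : SGame → SGame
  | mk L s R => mk (R.map neg) (-s) (L.map neg)

instance : Neg SGame := ⟨neg⟩

@[simp] theorem neg_mk (L : List SGame) (s : ℤ) (R : List SGame) :
    -mk L s R = mk (R.map (-·)) (-s) (L.map (-·)) := neg.eq_1 L s R

@[simp] theorem leftMoves_neg (G : SGame) : (-G).leftMoves = G.rightMoves.map (-·) := by
  cases G; simp

@[simp] theorem score_neg (G : SGame) : (-G).score = -G.score := by
  cases G; simp

@[simp] theorem rightMoves_neg (G : SGame) : (-G).rightMoves = G.leftMoves.map (-·) := by
  cases G; simp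

theorem leftScore_neg_and_rightScore_neg (G : SGame) :
    (-G).leftScore = -G.rightScore ∧ (-G).rightScore = -G.leftScore := by
  induction G using SGame.rec (motive_2 := fun l => ∀ g ∈ l,
    (-g).leftScore = -g.rightScore ∧ (-g).rightScore = -g.leftScore) with
  | mk L s R ihL ihR =>
    have hR : (R.map (-·)).map rightScore = (R.map leftScore).map (-·) := by
      simp only [List.map_map]
      exact List.map_congr_left fun g hg => (ihR g hg).2
    have hL : (L.map (-·)).map leftScore = (L.map rightScore).map (-·) := by
      simp only [List.map_map]
      exact List.map_congr_left fun g hg => (ihL g hg).1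
    constructor
    · rw [leftScore_eq, rightScore_eq]
      simp only [leftMoves_neg, rightMoves_mk, score_neg, score_mk, hR, List.max?_map_neg]
      exact Option.getD_map ..
    · rw [leftScore_eq, rightScore_eq]
      simp only [rightMoves_neg, leftMoves_mk, score_neg, score_mk, hL, List.min?_map_neg]
      exact Option.getD_map ..
  | nil g hg => cases hg
  | cons g l ihg ihl g' hg' =>
    rcases List.mem_cons.1 hg' with rfl | hg'
    exacts [ihg, ihl g' hg']

theorem neg_add (G H : SGame) : -(G.add H) = (-G).add (-H) := by
  refine ext ?_ (by simp [add_comm]) ?_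
  · simp only [leftMoves_neg, rightMoves_add, leftMoves_add, List.map_append, List.map_map]
    congr 1 <;> refine List.map_congr_left fun g hg => ?_
    · exact neg_add g H
    · exact neg_add G g
  · simp only [rightMoves_neg, rightMoves_add, leftMoves_add, List.map_append, List.map_map]
    congr 1 <;> refine List.map_congr_left fun g hg => ?_
    · exact neg_add g H
    · exact neg_add G g
termination_by sizeOf G + sizeOf H
decreasing_by
  all_goals first
    | have := sizeOf_lt_of_mem_leftMoves hg; omega
    | have := sizeOf_lt_of_mem_rightMoves hg; omega

theorem neg_Gex : -Gex = Gex := by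
  simp [Gex, num]

theorem rightScore_lt_zero_of_mem_leftMoves_Gex_add_Gex {g : SGame}
    (hg : g ∈ (Gex.add Gex).leftMoves) : g.rightScore < 0 := by
  have reply : ∀ {G : SGame} (r : SGame), r ∈ G.rightMoves → r.leftScore = -1 →
      G.rightScore < 0 :=
    fun _ hr hscore => (rightScore_le_of_mem hr).trans_lt (by omega)
  simp only [leftMoves_add, Gex, leftMoves_mk, List.map_cons, List.map_nil, List.cons_append,
    List.nil_append, List.mem_cons, List.not_mem_nil, or_false] at hg
  rcases hg with rfl | rfl | rfl | rfl
  · refine reply ((num 2).add (mk [num (-3)] (-2) [num (-1)])) ?_ ?_ <;>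
      simp [leftScore_eq, rightScore_eq, num]
  · refine reply ((mk [num 1] 2 [num 3]).add (num (-2))) ?_ ?_ <;>
      simp [leftScore_eq, rightScore_eq, num]
  · refine reply ((mk [num (-3)] (-2) [num (-1)]).add (num 2)) ?_ ?_ <;>
      simp [leftScore_eq, rightScore_eq, num]
  · refine reply ((num (-2)).add (mk [num 1] 2 [num 3])) ?_ ?_ <;>
      simp [leftScore_eq, rightScore_eq, num]

end SGame

theorem stmt_14 :
    (Gex.add Gex).leftScore < 0 ∧ (Gex.add Gex).rightScore > 0 := by
  have hleft : (Gex.add Gex).leftScore < 0 :=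
    SGame.leftScore_lt_of_forall (by simp [Gex])
      fun _ => SGame.rightScore_lt_zero_of_mem_leftMoves_Gex_add_Gex
  have hsymm := (SGame.leftScore_neg_and_rightScore_neg (Gex.add Gex)).1
  rw [SGame.neg_add, SGame.neg_Gex] at hsymm
  exact ⟨hleft, by omega⟩
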